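/- arXiv:2104.03826 — 9 statements merged into one kernel-verified Lean document; each statement's English description precedes it below -/
import Mathlib

section
/- Let F : 𝒜 → ℬ be a fully faithful left exact covariant functor between abelian categories whose essential image is closed under direct summands. If F(N) is F(M)-CS-Rickart in ℬ, then N is M-CS-Rickart in 𝒜. -/
open CategoryTheory CategoryTheory.Limits

universe v u v₂ u₂

/-- A monomorphism `f` is essential if every `h` with `f ≫ h` mono is mono. -/
def EssentialMono {C : Type u} [Category.{v} C] {M N : C} (f : M ⟶ N) : Prop :=
  Mono f ∧ ∀ ⦃P : C⦄ (h : N ⟶ P), Mono (f ≫ h) → Mono h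

/-- An epimorphism `f` is superfluous if every `h` with `h ≫ f` epi is epi. -/
def SuperfluousEpi {C : Type u} [Category.{v} C] {M N : C} (f : M ⟶ N) : Prop :=
  Epi f ∧ ∀ ⦃P : C⦄ (h : P ⟶ M), Epi (h ≫ f) → Epi h

/-- `CSRickart M N` : `N` is `M`-CS-Rickart. -/
def CSRickart {C : Type u} [Category.{v} C] [Abelian C] (M N : C) : Prop :=
  ∀ f : M ⟶ N, ∃ (L : C) (e : kernel f ⟶ L) (s : L ⟶ M),
    EssentialMono e ∧ (∃ retr : M ⟶ L, s ≫ retr = 𝟙 L) ∧ e ≫ s = kernel.ι f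

/-- `DualCSRickart M N` : `N` is dual `M`-CS-Rickart. -/
def DualCSRickart {C : Type u} [Category.{v} C] [Abelian C] (M N : C) : Prop :=
  ∀ f : M ⟶ N, ∃ (P : C) (r : N ⟶ P) (t : P ⟶ cokernel f),
    (∃ sec : P ⟶ N, sec ≫ r = 𝟙 P) ∧ SuperfluousEpi t ∧ r ≫ t = cokernel.π f

/-!
For a left exact functor `F` the kernel of `F f` is `F` applied to the kernel of `f`, up to the
canonical comparison isomorphism. So the CS-Rickart condition for `F f` factors `F (ker f)` as an
essential monomorphism into a direct summand `L` of `F M`. Closure of the essential image under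
direct summands puts `L` in the image of `F`, and full faithfulness lifts the factorisation, its
splitting, and the essentiality of the monomorphism back to `𝒜`.
-/

variable {C : Type*} [Category C] {D : Type*} [Category D]

/-- `i` factors as an essential monomorphism followed by the inclusion of a direct summand. -/
def EssentialInSummand {K M : C} (i : K ⟶ M) : Prop :=
  ∃ (L : C) (e : K ⟶ L) (s : L ⟶ M),
    EssentialMono e ∧ (∃ r : M ⟶ L, s ≫ r = 𝟙 L) ∧ e ≫ s = i

namespace EssentialMono

variable {X Y Z : C}

theorem isIso_comp {e : Y ⟶ Z} (he : EssentialMono e) (φ : X ⟶ Y) [IsIso φ] :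
    EssentialMono (φ ≫ e) :=
  ⟨haveI := he.1; mono_comp φ e, fun _ h hφe =>
    he.2 h ((mono_comp_iff_of_isIso φ (e ≫ h)).1 (by simpa only [Category.assoc] using hφe))⟩

theorem comp_isIso {e : X ⟶ Y} (he : EssentialMono e) (ψ : Y ⟶ Z) [IsIso ψ] :
    EssentialMono (e ≫ ψ) :=
  ⟨haveI := he.1; mono_comp e ψ, fun _ h heψ =>
    (mono_comp_iff_of_isIso ψ h).1 (he.2 (ψ ≫ h) (by simpa only [Category.assoc] using heψ))⟩

end EssentialMono

theorem CategoryTheory.Functor.essentialMono_of_essentialMono_map (F : C ⥤ D) [F.Faithful]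
    [F.PreservesMonomorphisms] {X Y : C} {e : X ⟶ Y} (he : EssentialMono (F.map e)) :
    EssentialMono e :=
  ⟨F.mono_of_mono_map he.1, fun _ g heg =>
    F.mono_of_mono_map (he.2 (F.map g) (by simpa only [F.map_comp] using F.map_mono (e ≫ g)))⟩

theorem EssentialInSummand.isIso_comp {K K' M : C} {i : K ⟶ M} (hi : EssentialInSummand i)
    (φ : K' ⟶ K) [IsIso φ] : EssentialInSummand (φ ≫ i) := by
  obtain ⟨L, e, s, he, hs, hes⟩ := hi
  exact ⟨L, φ ≫ e, s, he.isIso_comp φ, hs, by rw [Category.assoc, hes]⟩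

theorem CategoryTheory.Functor.essentialInSummand_of_essentialInSummand_map (F : C ⥤ D)
    [F.Full] [F.Faithful] [F.PreservesMonomorphisms]
    (hclosed : ∀ ⦃X Y : D⦄ (s : X ⟶ Y) (r : Y ⟶ X),
      s ≫ r = 𝟙 X → F.essImage Y → F.essImage X)
    {K M : C} {i : K ⟶ M} (hi : EssentialInSummand (F.map i)) : EssentialInSummand i := by
  obtain ⟨L, e, s, he, ⟨r, hsr⟩, hes⟩ := hi
  obtain ⟨L₀, ⟨φ⟩⟩ := hclosed s r hsr (F.obj_mem_essImage M)
  refine ⟨L₀, F.preimage (e ≫ φ.inv), F.preimage (φ.hom ≫ s),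
    ?_, ⟨F.preimage (r ≫ φ.inv), ?_⟩, ?_⟩
  · exact F.essentialMono_of_essentialMono_map
      (by simpa only [F.map_preimage] using he.comp_isIso φ.inv)
  · exact F.map_injective (by simp [reassoc_of% hsr])
  · exact F.map_injective (by simp [hes])

theorem csRickart_reflect_of_fullyFaithful_leftExact_summandClosed
    {A : Type u} [Category.{v} A] [Abelian A] {B : Type u₂} [Category.{v₂} B] [Abelian B]
    (F : A ⥤ B) [F.Full] [F.Faithful] [PreservesFiniteLimits F]
    (hclosed : ∀ ⦃X Y : B⦄ (s : X ⟶ Y) (r : Y ⟶ X),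
      s ≫ r = 𝟙 X → F.essImage Y → F.essImage X)
    (M N : A) (h : CSRickart (F.obj M) (F.obj N)) : CSRickart M N := by
  intro f
  have hFf : EssentialInSummand (F.map (kernel.ι f)) := by
    rw [← kernelComparison_comp_ι f F]
    exact EssentialInSummand.isIso_comp (h (F.map f)) _
  exact F.essentialInSummand_of_essentialInSummand_map hclosed hFf
end

section
/- Let F : 𝒜 → ℬ be a fully faithful right exact covariant functor between abelian categories whose essential image is closed under direct summands. If F(N) is dual F(M)-CS-Rickart in ℬ, then N is dual M-CS-Rickart in 𝒜. -/
open CategoryTheory CategoryTheory.Limits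

universe v u v₂ u₂

/-!
The functor moves the whole problem into `ℬ`: the summand `P` of `F N` provided there lies
in the essential image, say `P ≅ F P₀`, and `F` identifies `F (coker f)` with `coker (F f)`.
Transporting the retraction and the superfluous epimorphism along these isomorphisms gives
morphisms in the image of `F`, and full faithfulness pulls them back to `𝒜`; superfluity
survives because `F` preserves and reflects epimorphisms.
-/

namespace SuperfluousEpi

variable {C : Type u} [Category.{v} C]

theorem isIso_comp {X Y Z : C} {g : X ⟶ Y} [IsIso g] {t : Y ⟶ Z} (ht : SuperfluousEpi t) :
    SuperfluousEpi (g ≫ t) := by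
  have := ht.1
  refine ⟨epi_comp g t, fun P h hh => ?_⟩
  have : Epi (h ≫ g) := ht.2 _ (by simpa only [Category.assoc] using hh)
  simpa only [Category.assoc, IsIso.hom_inv_id, Category.comp_id] using
    epi_comp (h ≫ g) (inv g)

theorem comp_isIso {X Y Z : C} {t : X ⟶ Y} {g : Y ⟶ Z} [IsIso g] (ht : SuperfluousEpi t) :
    SuperfluousEpi (t ≫ g) := by
  have := ht.1
  refine ⟨epi_comp t g, fun P h hh => ht.2 _ ?_⟩
  simpa only [Category.assoc, IsIso.hom_inv_id, Category.comp_id] using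
    epi_comp (h ≫ t ≫ g) (inv g)

theorem of_map {D : Type u₂} [Category.{v₂} D] (F : C ⥤ D) [F.PreservesEpimorphisms]
    [F.ReflectsEpimorphisms] {X Y : C} {t : X ⟶ Y} (ht : SuperfluousEpi (F.map t)) :
    SuperfluousEpi t := by
  have := ht.1
  refine ⟨F.epi_of_epi_map this, fun P h hh => F.epi_of_epi_map (ht.2 _ ?_)⟩
  simpa only [F.map_comp] using F.map_epi (h ≫ t)

end SuperfluousEpi

theorem CategoryTheory.Functor.exists_retraction_comp_superfluousEpi_of_map
    {C : Type u} [Category.{v} C] {D : Type u₂} [Category.{v₂} D] (F : C ⥤ D)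
    [F.Full] [F.Faithful] [F.PreservesEpimorphisms] {N P Q : C} (π : N ⟶ Q)
    (r : F.obj N ⟶ F.obj P) (sec : F.obj P ⟶ F.obj N) (t : F.obj P ⟶ F.obj Q)
    (hsec : sec ≫ r = 𝟙 _) (ht : SuperfluousEpi t) (hrt : r ≫ t = F.map π) :
    ∃ (r' : N ⟶ P) (t' : P ⟶ Q),
      (∃ sec' : P ⟶ N, sec' ≫ r' = 𝟙 P) ∧ SuperfluousEpi t' ∧ r' ≫ t' = π := by
  refine ⟨F.preimage r, F.preimage t, ⟨F.preimage sec, F.map_injective ?_⟩,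
    SuperfluousEpi.of_map F ?_, F.map_injective ?_⟩
  · simpa only [F.map_comp, F.map_preimage, F.map_id] using hsec
  · simpa only [F.map_preimage] using ht
  · simpa only [F.map_comp, F.map_preimage] using hrt

theorem dualCSRickart_reflect_of_fullyFaithful_rightExact_summandClosed
    {A : Type u} [Category.{v} A] [Abelian A] {B : Type u₂} [Category.{v₂} B] [Abelian B]
    (F : A ⥤ B) [F.Full] [F.Faithful] [PreservesFiniteColimits F]
    (hclosed : ∀ ⦃X Y : B⦄ (s : X ⟶ Y) (r : Y ⟶ X),
      s ≫ r = 𝟙 X → F.essImage Y → F.essImage X)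
    (M N : A) (h : DualCSRickart (F.obj M) (F.obj N)) : DualCSRickart M N := by
  intro f
  obtain ⟨P, r, t, ⟨sec, hsec⟩, ht, hrt⟩ := h (F.map f)
  obtain ⟨P₀, ⟨σ⟩⟩ := hclosed sec r hsec (F.obj_mem_essImage N)
  obtain ⟨r', t', hr', ht', hrt'⟩ := F.exists_retraction_comp_superfluousEpi_of_map
    (cokernel.π f) (r ≫ σ.inv) (σ.hom ≫ sec) (σ.hom ≫ t ≫ cokernelComparison f F)
    (by simp [reassoc_of% hsec]) (ht.comp_isIso.isIso_comp)
    (by simp [reassoc_of% hrt])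
  exact ⟨P₀, r', t', hr', ht', hrt'⟩
end

section
/- Let (L, R) be an adjoint pair with L : 𝒜 → ℬ exact, R : ℬ → 𝒜, and let M, N be R-static objects of ℬ. If N is M-CS-Rickart in ℬ, then R(N) is R(M)-CS-Rickart in 𝒜. -/
open CategoryTheory CategoryTheory.Limits

universe v u v₂ u₂

/-!
`R` is full on `R`-static objects: `f : R M ⟶ R N` is `R g` for `g = ε_M⁻¹ ≫ L f ≫ ε_N`.
Factor `ker g ⟶ Q ⟶ M` by the hypothesis on `g`. Static objects are closed under direct summands,
and under kernels because `L` is left exact, so `Q` and `ker g` are static. There `ε` identifies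
`L (R e)` with `e`, so if `R e ≫ h` is mono then so is `L h`, by essentiality of `e`; and `L h`
mono forces `h` mono for any `h` out of `R Q`, since `k ↦ L k ≫ ε_Q` is injective. Finally `R`,
a right adjoint, takes `ker g` to `ker (R g)` and sections to sections.
-/

lemma EssentialMono.isIso_comp_s9 {C : Type u} [Category.{v} C] {X K Q : C} (i : X ⟶ K) [IsIso i]
    {e : K ⟶ Q} (he : EssentialMono e) : EssentialMono (i ≫ e) := by
  have := he.1
  refine ⟨inferInstance, fun P h hih => he.2 h ?_⟩
  rwa [Category.assoc, mono_comp_iff_of_isIso] at hih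

namespace CategoryTheory.Adjunction

variable {A : Type u} [Category.{v} A] {B : Type u₂} [Category.{v₂} B] {L : A ⥤ B} {R : B ⥤ A}

lemma exists_map_eq_of_isIso_counit (adj : L ⊣ R) {M N : B} [IsIso (adj.counit.app M)]
    (f : R.obj M ⟶ R.obj N) : ∃ g : M ⟶ N, R.map g = f := by
  have map_eq (g : M ⟶ N) : R.map g = adj.homEquiv _ _ (adj.counit.app M ≫ g) := by
    simp [homEquiv_unit]
  exact ⟨inv (adj.counit.app M) ≫ (adj.homEquiv _ _).symm f, by simp [map_eq]⟩

lemma mono_of_mono_map (adj : L ⊣ R) {Q : B} {P : A} (h : R.obj Q ⟶ P) [Mono (L.map h)] :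
    Mono h := by
  refine ⟨fun k₁ k₂ hk => (adj.homEquiv _ _).symm.injective ?_⟩
  have : L.map k₁ = L.map k₂ := by
    rw [← cancel_mono (L.map h), ← L.map_comp, hk, L.map_comp]
  rw [homEquiv_counit, homEquiv_counit, this]

lemma essentialMono_map (adj : L ⊣ R) [L.PreservesMonomorphisms] {K Q : B} {e : K ⟶ Q}
    (he : EssentialMono e) [IsIso (adj.counit.app K)] [IsIso (adj.counit.app Q)] :
    EssentialMono (R.map e) := by
  have := he.1
  have := adj.isRightAdjoint
  refine ⟨inferInstance, fun P h hm => ?_⟩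
  suffices Mono (L.map h) from adj.mono_of_mono_map h
  have transport : e ≫ inv (adj.counit.app Q) = inv (adj.counit.app K) ≫ L.map (R.map e) := by
    rw [IsIso.comp_inv_eq, Category.assoc, IsIso.eq_inv_comp]
    exact (adj.counit.naturality e).symm
  have : Mono (e ≫ inv (adj.counit.app Q) ≫ L.map h) := by
    rw [reassoc_of% transport, ← L.map_comp]
    infer_instance
  exact (mono_comp_iff_of_isIso _ _).1 (he.2 _ this)

lemma isIso_counit_app_kernel [HasZeroMorphisms A] [HasZeroMorphisms B] [HasKernels B]
    (adj : L ⊣ R) [PreservesFiniteLimits L] {M N : B} (g : M ⟶ N)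
    [IsIso (adj.counit.app M)] [IsIso (adj.counit.app N)] :
    IsIso (adj.counit.app (kernel g)) := by
  have := adj.isLeftAdjoint
  have := adj.isRightAdjoint
  have : PreservesLimitsOfShape WalkingParallelPair R :=
    adj.rightAdjoint_preservesLimits.preservesLimitsOfShape
  have : IsIso (kernel.map ((R ⋙ L).map g) g _ _ (adj.counit.naturality g)) :=
    (kernel.mapIso _ _ (asIso (adj.counit.app M)) (asIso (adj.counit.app N))
      (adj.counit.naturality g)).isIso_hom
  have factor : adj.counit.app (kernel g) =
      kernelComparison g (R ⋙ L) ≫ kernel.map _ g _ _ (adj.counit.naturality g) := by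
    rw [← cancel_mono (kernel.ι g), Category.assoc, kernel.lift_ι, kernelComparison_comp_ι_assoc]
    exact (adj.counit.naturality (kernel.ι g)).symm
  rw [factor]
  infer_instance

end CategoryTheory.Adjunction

theorem csRickart_R_of_static_general
    {A : Type u} [Category.{v} A] [Abelian A] {B : Type u₂} [Category.{v₂} B] [Abelian B]
    (L : A ⥤ B) (R : B ⥤ A) (adj : L ⊣ R)
    [PreservesFiniteLimits L]
    (M N : B) (hM : IsIso (adj.counit.app M)) (hN : IsIso (adj.counit.app N))
    (h : CSRickart M N) : CSRickart (R.obj M) (R.obj N) := by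
  have := adj.isRightAdjoint
  have : PreservesLimitsOfShape WalkingParallelPair R :=
    adj.rightAdjoint_preservesLimits.preservesLimitsOfShape
  intro f
  obtain ⟨g, rfl⟩ := adj.exists_map_eq_of_isIso_counit f
  obtain ⟨Q, e, s, he, ⟨r, hsr⟩, hes⟩ := h g
  have : IsIso (adj.counit.app Q) :=
    (MorphismProperty.isomorphisms B).of_retract (adj.counit.retractArrowApp ⟨s, r, hsr⟩) hM
  have := adj.isIso_counit_app_kernel g
  refine ⟨R.obj Q, inv (kernelComparison g R) ≫ R.map e, R.map s,
    (adj.essentialMono_map he).isIso_comp_s9 _, ⟨R.map r, by rw [← R.map_comp, hsr, R.map_id]⟩, ?_⟩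
  rw [Category.assoc, ← R.map_comp, hes, IsIso.inv_comp_eq, kernelComparison_comp_ι]

theorem csRickart_R_of_static
    {A : Type u} [Category.{v} A] [Abelian A] {B : Type u₂} [Category.{v₂} B] [Abelian B]
    (L : A ⥤ B) (R : B ⥤ A) (adj : L ⊣ R)
    [PreservesFiniteLimits L] [PreservesFiniteColimits L]
    (M N : B) (hM : IsIso (adj.counit.app M)) (hN : IsIso (adj.counit.app N))
    (h : CSRickart M N) : CSRickart (R.obj M) (R.obj N) :=
  csRickart_R_of_static_general L R adj M N hM hN h
end

section
/- Let (L, R) be an adjoint pair with L : 𝒜 → ℬ exact, R : ℬ → 𝒜 reflecting zero objects, and let M, N be R-static objects of ℬ. If R(N) is R(M)-CS-Rickart in 𝒜, then N is M-CS-Rickart in ℬ. -/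
open CategoryTheory CategoryTheory.Limits

universe v u v₂ u₂

/-!
Everything is transported along `L`. For `f : M ⟶ N` between `R`-static objects, exactness of `L`
and the counit isomorphisms identify `kernel f` with `L (kernel (R f))`, so the data
`e ≫ s = kernel.ι (R f)` for `R f` is carried by `L` to data for `f`, sections going to sections.
The only real point is that `L e` stays essential. If `L e ≫ h` is mono, then so is
`R (L e ≫ h)`; precomposing with the unit, which is monic on `kernel (R f) ⊆ R M` and invertible on
the retract `Q` of `R M`, turns it into `e ≫ η_Q ≫ R h`. Essentiality of `e` makes `R h` mono, and
`h` is mono because `R` preserves kernels and reflects zero objects.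
-/

theorem EssentialMono.iso_comp {C : Type u} [Category.{v} C] {K K' Q : C} (i : K' ≅ K)
    {e : K ⟶ Q} (he : EssentialMono e) : EssentialMono (i.hom ≫ e) := by
  have := he.1
  refine ⟨inferInstance, fun _ h hmono => he.2 h ?_⟩
  simpa using (inferInstance : Mono (i.inv ≫ (i.hom ≫ e) ≫ h))

namespace CategoryTheory

theorem Functor.reflectsMonomorphisms_of_reflects_isZero {C : Type u} [Category.{v} C]
    {D : Type u₂} [Category.{v₂} D] [Abelian C] [Abelian D] (F : C ⥤ D)
    [F.PreservesZeroMorphisms] [PreservesFiniteLimits F]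
    (hF : ∀ X : C, IsZero (F.obj X) → IsZero X) : F.ReflectsMonomorphisms where
  reflects h _ :=
    Preadditive.mono_of_isZero_kernel h <|
      hF _ ((isZero_kernel_of_mono (F.map h)).of_iso (PreservesKernel.iso F h))

namespace Adjunction

variable {C : Type u} [Category.{v} C] {D : Type u₂} [Category.{v₂} D] {L : C ⥤ D} {R : D ⥤ C}
  (adj : L ⊣ R)

theorem isIso_unit_app_obj (X : D) [IsIso (adj.counit.app X)] : IsIso (adj.unit.app (R.obj X)) :=
  have : IsIso (adj.unit.app (R.obj X) ≫ R.map (adj.counit.app X)) := by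
    rw [adj.right_triangle_components]; exact IsIso.id _
  IsIso.of_isIso_comp_right _ (R.map (adj.counit.app X))

theorem isIso_unit_app_of_retract {Q X : C} (h : Retract Q X) [IsIso (adj.unit.app X)] :
    IsIso (adj.unit.app Q) :=
  (MorphismProperty.isomorphisms C).of_retract (NatTrans.retractArrowApp adj.unit h)
    (inferInstanceAs (IsIso (adj.unit.app X)))

theorem mono_unit_app_of_mono {K X : C} (ι : K ⟶ X) [Mono ι] [Mono (adj.unit.app X)] :
    Mono (adj.unit.app K) :=
  mono_of_mono_fac (adj.unit_naturality ι)

theorem essentialMono_map_s10 {K Q : C} {e : K ⟶ Q} (he : EssentialMono e)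
    [L.PreservesMonomorphisms] [R.ReflectsMonomorphisms]
    [Mono (adj.unit.app K)] [IsIso (adj.unit.app Q)] : EssentialMono (L.map e) := by
  have := he.1
  have := Functor.preservesMonomorphisms_of_adjunction adj
  refine ⟨inferInstance, fun _ h _ => R.mono_of_mono_map ?_⟩
  have : Mono (e ≫ adj.unit.app Q ≫ R.map h) := by
    rw [← adj.unit_naturality_assoc, ← R.map_comp]
    infer_instance
  exact (mono_comp_iff_of_isIso _ _).mp (he.2 _ this)

section Kernels

variable [HasZeroMorphisms C] [HasZeroMorphisms D] [HasKernels C] [HasKernels D]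
  [L.PreservesZeroMorphisms] [PreservesFiniteLimits L]

noncomputable def kernelIsoOfIsIsoCounit {M N : D} (f : M ⟶ N) [IsIso (adj.counit.app M)]
    [IsIso (adj.counit.app N)] : kernel f ≅ L.obj (kernel (R.map f)) :=
  kernel.mapIso f (L.map (R.map f)) (asIso (adj.counit.app M)).symm
      (asIso (adj.counit.app N)).symm (by simp [← adj.counit_naturality_assoc]) ≪≫
    (PreservesKernel.iso L (R.map f)).symm

theorem kernelIsoOfIsIsoCounit_hom_comp {M N : D} (f : M ⟶ N) [IsIso (adj.counit.app M)]
    [IsIso (adj.counit.app N)] :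
    (adj.kernelIsoOfIsIsoCounit f).hom ≫ L.map (kernel.ι (R.map f)) ≫ adj.counit.app M =
      kernel.ι f := by
  simp [kernelIsoOfIsIsoCounit, kernel.mapIso]

end Kernels

end Adjunction

end CategoryTheory

theorem csRickart_of_R_csRickart_static_general
    {A : Type u} [Category.{v} A] [Abelian A] {B : Type u₂} [Category.{v₂} B] [Abelian B]
    (L : A ⥤ B) (R : B ⥤ A) (adj : L ⊣ R)
    [PreservesFiniteLimits L]
    (hrefl : ∀ X : B, IsZero (R.obj X) → IsZero X)
    (M N : B) (hM : IsIso (adj.counit.app M)) (hN : IsIso (adj.counit.app N))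
    (h : CSRickart (R.obj M) (R.obj N)) : CSRickart M N := by
  have := adj.rightAdjoint_preservesLimits
  have := R.reflectsMonomorphisms_of_reflects_isZero hrefl
  have := adj.isIso_unit_app_obj M
  intro f
  obtain ⟨Q, e, s, he, ⟨r, hsr⟩, hes⟩ := h (R.map f)
  have := adj.isIso_unit_app_of_retract ⟨s, r, hsr⟩
  have := adj.mono_unit_app_of_mono (kernel.ι (R.map f))
  refine ⟨L.obj Q, (adj.kernelIsoOfIsIsoCounit f).hom ≫ L.map e, L.map s ≫ adj.counit.app M,
    (adj.essentialMono_map_s10 he).iso_comp _, ⟨inv (adj.counit.app M) ≫ L.map r, ?_⟩, ?_⟩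
  · rw [Category.assoc, IsIso.hom_inv_id_assoc, ← L.map_comp, hsr, L.map_id]
  · rw [Category.assoc, ← L.map_comp_assoc, hes, adj.kernelIsoOfIsIsoCounit_hom_comp]

theorem csRickart_of_R_csRickart_static
    {A : Type u} [Category.{v} A] [Abelian A] {B : Type u₂} [Category.{v₂} B] [Abelian B]
    (L : A ⥤ B) (R : B ⥤ A) (adj : L ⊣ R)
    [PreservesFiniteLimits L] [PreservesFiniteColimits L]
    (hrefl : ∀ X : B, IsZero (R.obj X) → IsZero X)
    (M N : B) (hM : IsIso (adj.counit.app M)) (hN : IsIso (adj.counit.app N))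
    (h : CSRickart (R.obj M) (R.obj N)) : CSRickart M N :=
  csRickart_of_R_csRickart_static_general L R adj hrefl M N hM hN h
end

section
/- Let (L, R) be an adjoint pair with R : ℬ → 𝒜 exact, L : 𝒜 → ℬ, and let M, N be R-adstatic objects of 𝒜. If N is dual M-CS-Rickart in 𝒜, then L(N) is dual L(M)-CS-Rickart in ℬ. -/
open CategoryTheory CategoryTheory.Limits

universe v u v₂ u₂

/-!
On `R`-adstatic objects `L` is full: `g : L M ⟶ L N` is `L` of `η_M ≫ R g ≫ η_N⁻¹`. Adstatic
objects are closed under retracts and, `R` being right exact, under cokernels, so `L` carries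
the decomposition `coker f = t ∘ r` to one of `coker (L f)`. Superfluousness of `L t` is
reflected back through `R`, since a morphism `h` into some `L X` is epi as soon as `R h` is.
-/

namespace CategoryTheory.Adjunction

variable {A : Type u} [Category.{v} A] {B : Type u₂} [Category.{v₂} B]
  {L : A ⥤ B} {R : B ⥤ A} (adj : L ⊣ R)

include adj in
lemma map_surjective_of_isIso_unit (M : A) {N : A} [IsIso (adj.unit.app N)] :
    Function.Surjective (L.map : (M ⟶ N) → (L.obj M ⟶ L.obj N)) := fun g =>
  ⟨adj.unit.app M ≫ R.map g ≫ inv (adj.unit.app N), adj.homEquiv _ _ |>.injective <| by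
    simp [homEquiv_unit]⟩

lemma isIso_unit_app_of_retract_s11 {P N : A} (e : Retract P N) [IsIso (adj.unit.app N)] :
    IsIso (adj.unit.app P) :=
  (MorphismProperty.isomorphisms A).of_retract (adj.unit.retractArrowApp e) ‹_›

include adj in
lemma epi_of_epi_map {X : A} {Q : B} (h : Q ⟶ L.obj X) [Epi (R.map h)] : Epi h where
  left_cancellation u v huv := adj.homEquiv _ _ |>.injective <| by
    rw [homEquiv_unit, homEquiv_unit]
    congr 1
    rw [← cancel_epi (R.map h), ← R.map_comp, ← R.map_comp, huv]

lemma isIso_unit_app_cokernel [Abelian A] [PreservesFiniteColimits R] {M N : A}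
    (f : M ⟶ N) [Epi (adj.unit.app M)] [IsIso (adj.unit.app N)] :
    IsIso (adj.unit.app (cokernel f)) := by
  have := adj.isLeftAdjoint
  have hw : f ≫ adj.unit.app N = adj.unit.app M ≫ (L ⋙ R).map f := adj.unit.naturality f
  have : adj.unit.app (cokernel f) =
      cokernel.map _ _ _ _ hw ≫ cokernelComparison f (L ⋙ R) := by
    rw [← cancel_epi (cokernel.π f), cokernel.π_desc_assoc, Category.assoc,
      π_comp_cokernelComparison]
    exact adj.unit.naturality _
  rw [this]
  infer_instance

end CategoryTheory.Adjunction

lemma SuperfluousEpi.comp_isIso_s11 {C : Type u} [Category.{v} C] {X Y Z : C} {t : X ⟶ Y}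
    (ht : SuperfluousEpi t) (e : Y ⟶ Z) [IsIso e] : SuperfluousEpi (t ≫ e) :=
  have := ht.1
  ⟨inferInstance, fun _ h hepi => ht.2 h <| by
    rwa [← Category.assoc, epi_comp_iff_of_isIso] at hepi⟩

lemma SuperfluousEpi.map_of_isIso_unit {A : Type u} [Category.{v} A] {B : Type u₂}
    [Category.{v₂} B] {L : A ⥤ B} {R : B ⥤ A} (adj : L ⊣ R) [R.PreservesEpimorphisms]
    {P C : A} {t : P ⟶ C} [IsIso (adj.unit.app P)] [IsIso (adj.unit.app C)]
    (ht : SuperfluousEpi t) : SuperfluousEpi (L.map t) := by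
  have := ht.1
  have := adj.isLeftAdjoint
  refine ⟨inferInstance, fun Q h hepi => ?_⟩
  have hRLt : R.map (L.map t) = inv (adj.unit.app P) ≫ t ≫ adj.unit.app C := by
    rw [IsIso.eq_inv_comp]
    exact (adj.unit.naturality t).symm
  have : Epi ((R.map h ≫ inv (adj.unit.app P)) ≫ t) := by
    have := R.map_epi (h ≫ L.map t)
    rwa [R.map_comp, hRLt, ← Category.assoc, ← Category.assoc, epi_comp_iff_of_isIso]
      at this
  have := ht.2 _ this
  have : Epi (R.map h) := by rwa [epi_comp_iff_of_isIso] at this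
  exact adj.epi_of_epi_map h

theorem dualCSRickart_L_of_adstatic_general
    {A : Type u} [Category.{v} A] [Abelian A] {B : Type u₂} [Category.{v₂} B] [Abelian B]
    (L : A ⥤ B) (R : B ⥤ A) (adj : L ⊣ R)
    [PreservesFiniteColimits R]
    (M N : A) (hM : IsIso (adj.unit.app M)) (hN : IsIso (adj.unit.app N))
    (h : DualCSRickart M N) : DualCSRickart (L.obj M) (L.obj N) := by
  have := adj.isLeftAdjoint
  intro g
  obtain ⟨f, rfl⟩ := adj.map_surjective_of_isIso_unit M g
  obtain ⟨P, r, t, ⟨sec, hsec⟩, ht, hrt⟩ := h f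
  have hP := adj.isIso_unit_app_of_retract_s11 ⟨sec, r, hsec⟩
  have hcoker := adj.isIso_unit_app_cokernel f
  refine ⟨L.obj P, L.map r, L.map t ≫ inv (cokernelComparison f L),
    ⟨L.map sec, by rw [← L.map_comp, hsec, L.map_id]⟩,
    (ht.map_of_isIso_unit adj).comp_isIso_s11 _, ?_⟩
  rw [← L.map_comp_assoc, hrt, IsIso.comp_inv_eq, π_comp_cokernelComparison]

theorem dualCSRickart_L_of_adstatic
    {A : Type u} [Category.{v} A] [Abelian A] {B : Type u₂} [Category.{v₂} B] [Abelian B]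
    (L : A ⥤ B) (R : B ⥤ A) (adj : L ⊣ R)
    [PreservesFiniteLimits R] [PreservesFiniteColimits R]
    (M N : A) (hM : IsIso (adj.unit.app M)) (hN : IsIso (adj.unit.app N))
    (h : DualCSRickart M N) : DualCSRickart (L.obj M) (L.obj N) :=
  dualCSRickart_L_of_adstatic_general L R adj M N hM hN h
end

section
/- Let (L, R) be an adjoint pair of covariant functors between abelian categories with L exact and R fully faithful. For objects M, N of ℬ, N is M-CS-Rickart in ℬ if and only if R(N) is R(M)-CS-Rickart in 𝒜. -/
/-!
`N` is `M`-CS-Rickart exactly when every kernel inclusion `ker f ⟶ M` is essential in a direct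
summand of `M`. The fully faithful right adjoint `R` is a bijection `(M ⟶ N) ≃ (R M ⟶ R N)` and
carries kernels to kernels, so it suffices that `R` preserves and reflects this property of a
morphism. `R` reflects essential monos, being faithful and mono-preserving. It preserves them:
if `R e ≫ h` is mono then so is `L (R e) ≫ L h`; through the counit isomorphism `L (R e)` is
`e`, hence essential, so `L h` is mono, and then so is `h` because the unit at `R Q` is split
mono. Finally a direct summand of `R M` is the image of a direct summand of `M`, as `R` is fully
faithful and idempotents split in `B`.
-/

open CategoryTheory CategoryTheory.Limits

universe v u v₂ u₂

def IsEssentialInDirectSummand {C : Type u} [Category.{v} C] {K M : C} (ι : K ⟶ M) : Prop :=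
  ∃ (Q : C) (e : K ⟶ Q) (s : Q ⟶ M),
    EssentialMono e ∧ (∃ r : M ⟶ Q, s ≫ r = 𝟙 Q) ∧ e ≫ s = ι

section IsoInvariance

variable {C : Type u} [Category.{v} C]

theorem EssentialMono.comp_iso {X Y Z : C} {e : X ⟶ Y} (he : EssentialMono e)
    (i : Y ⟶ Z) [IsIso i] : EssentialMono (e ≫ i) := by
  have : Mono e := he.1
  refine ⟨mono_comp _ _, fun P h hm => ?_⟩
  rw [Category.assoc] at hm
  exact (mono_comp_iff_of_isIso i h).mp (he.2 (i ≫ h) hm)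

theorem EssentialMono.iso_comp_s13 {W X Y : C} {e : X ⟶ Y} (he : EssentialMono e)
    (i : W ⟶ X) [IsIso i] : EssentialMono (i ≫ e) := by
  have : Mono e := he.1
  refine ⟨mono_comp _ _, fun P h hm => he.2 h ?_⟩
  rwa [Category.assoc, mono_comp_iff_of_isIso] at hm

theorem IsEssentialInDirectSummand.iso_comp_s13 {J K M : C} {ι : K ⟶ M}
    (hι : IsEssentialInDirectSummand ι) (i : J ⟶ K) [IsIso i] :
    IsEssentialInDirectSummand (i ≫ ι) := by
  obtain ⟨Q, e, s, he, hs, rfl⟩ := hι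
  exact ⟨Q, i ≫ e, s, he.iso_comp_s13 i, hs, Category.assoc _ _ _⟩

theorem isEssentialInDirectSummand_iso_comp_iff {J K M : C} (i : J ⟶ K) [IsIso i]
    (ι : K ⟶ M) : IsEssentialInDirectSummand (i ≫ ι) ↔ IsEssentialInDirectSummand ι := by
  refine ⟨fun h => ?_, fun h => h.iso_comp_s13 i⟩
  simpa using h.iso_comp_s13 (inv i)

end IsoInvariance

theorem CategoryTheory.Functor.exists_summand_iso_map_of_summand_obj {A : Type u}
    [Category.{v} A] {B : Type u₂} [Category.{v₂} B] [IsIdempotentComplete B] (R : B ⥤ A)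
    [R.Full] [R.Faithful] {Q : A} {M : B} (s : Q ⟶ R.obj M) (r : R.obj M ⟶ Q)
    (hsr : s ≫ r = 𝟙 Q) :
    ∃ (Q' : B) (i : Q' ⟶ M) (φ : Q ≅ R.obj Q'),
      (∃ p : M ⟶ Q', i ≫ p = 𝟙 Q') ∧ φ.hom ≫ R.map i = s := by
  have hrs : R.map (R.preimage (r ≫ s)) = r ≫ s := R.map_preimage _
  have hidem : R.preimage (r ≫ s) ≫ R.preimage (r ≫ s) = R.preimage (r ≫ s) :=
    R.map_injective (by simp [hrs, reassoc_of% hsr])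
  obtain ⟨Q', i, p, hip, hpi⟩ := IsIdempotentComplete.idempotents_split M _ hidem
  have hRpi : R.map p ≫ R.map i = r ≫ s := by rw [← R.map_comp, hpi, hrs]
  refine ⟨Q', i, ⟨s ≫ R.map p, R.map i ≫ r, ?_, ?_⟩, ⟨p, hip⟩, ?_⟩
  · simp [reassoc_of% hRpi, hsr]
  · calc (R.map i ≫ r) ≫ s ≫ R.map p = R.map (i ≫ p ≫ i ≫ p) := by
          simp [← reassoc_of% hRpi]
      _ = 𝟙 _ := by simp [hip]
  · simp [hRpi, reassoc_of% hsr]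

section Adjunction

variable {A : Type u} [Category.{v} A] {B : Type u₂} [Category.{v₂} B]
  {L : A ⥤ B} {R : B ⥤ A} (adj : L ⊣ R)
include adj

theorem CategoryTheory.Adjunction.mono_of_mono_map_of_obj {Q : B} {P : A} (h : R.obj Q ⟶ P)
    [Mono (L.map h)] : Mono h := by
  refine ⟨fun g₁ g₂ hg => ?_⟩
  have hL : L.map g₁ = L.map g₂ := (cancel_mono (L.map h)).mp (by simpa using congr(L.map $hg))
  rw [← Category.comp_id g₁, ← Category.comp_id g₂, ← adj.right_triangle_components Q,
    ← adj.unit_naturality_assoc, ← adj.unit_naturality_assoc, hL]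

theorem CategoryTheory.Adjunction.essentialMono_of_essentialMono_map [R.Faithful] {K Q : B}
    {e : K ⟶ Q} (he : EssentialMono (R.map e)) : EssentialMono e := by
  have := R.preservesMonomorphisms_of_adjunction adj
  refine ⟨R.mono_of_mono_map he.1, fun P h hm => R.mono_of_mono_map (he.2 _ ?_)⟩
  rw [← R.map_comp]
  infer_instance

variable [R.Full] [R.Faithful]

theorem CategoryTheory.Adjunction.essentialMono_map_of_essentialMono [L.PreservesMonomorphisms]
    {K Q : B} {e : K ⟶ Q} (he : EssentialMono e) : EssentialMono (R.map e) := by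
  have := R.preservesMonomorphisms_of_adjunction adj
  have : Mono e := he.1
  refine ⟨inferInstance, fun P h hm => ?_⟩
  have hLRe : EssentialMono (L.map (R.map e)) := by
    have hnat : L.map (R.map e) = adj.counit.app K ≫ e ≫ inv (adj.counit.app Q) := by
      rw [← Category.assoc, IsIso.eq_comp_inv, adj.counit_naturality]
    simpa [hnat] using (he.iso_comp_s13 (adj.counit.app K)).comp_iso (inv (adj.counit.app Q))
  have : Mono (L.map (R.map e) ≫ L.map h) := by
    rw [← L.map_comp]
    infer_instance
  have : Mono (L.map h) := hLRe.2 _ this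
  exact adj.mono_of_mono_map_of_obj h

theorem CategoryTheory.Adjunction.isEssentialInDirectSummand_map_iff [IsIdempotentComplete B]
    [L.PreservesMonomorphisms] {K M : B} (ι : K ⟶ M) :
    IsEssentialInDirectSummand (R.map ι) ↔ IsEssentialInDirectSummand ι := by
  constructor
  · rintro ⟨Q, e, s, he, ⟨r, hsr⟩, hes⟩
    obtain ⟨Q', i, φ, hi, hφi⟩ := R.exists_summand_iso_map_of_summand_obj s r hsr
    refine ⟨Q', R.preimage (e ≫ φ.hom), i, ?_, hi, R.map_injective ?_⟩
    · exact adj.essentialMono_of_essentialMono_map (by simpa using he.comp_iso φ.hom)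
    · simp [hφi, hes]
  · rintro ⟨Q, e, s, he, ⟨r, hsr⟩, rfl⟩
    refine ⟨R.obj Q, R.map e, R.map s, adj.essentialMono_map_of_essentialMono he,
      ⟨R.map r, ?_⟩, (R.map_comp e s).symm⟩
    rw [← R.map_comp, hsr, R.map_id]

end Adjunction

theorem csRickart_iff_R_csRickart_general
    {A : Type u} [Category.{v} A] [Abelian A] {B : Type u₂} [Category.{v₂} B] [Abelian B]
    (L : A ⥤ B) (R : B ⥤ A) (adj : L ⊣ R)
    [PreservesFiniteLimits L] [R.Full] [R.Faithful]
    (M N : B) :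
    CSRickart M N ↔ CSRickart (R.obj M) (R.obj N) := by
  have := adj.rightAdjoint_preservesLimits
  calc CSRickart M N ↔ ∀ f : M ⟶ N, IsEssentialInDirectSummand (kernel.ι f) := Iff.rfl
    _ ↔ ∀ f : M ⟶ N, IsEssentialInDirectSummand (kernel.ι (R.map f)) := by
        refine forall_congr' fun f => ?_
        rw [← adj.isEssentialInDirectSummand_map_iff, ← kernelComparison_comp_ι f R,
          isEssentialInDirectSummand_iso_comp_iff]
    _ ↔ CSRickart (R.obj M) (R.obj N) :=
        (R.map_surjective.forall (p := fun f => IsEssentialInDirectSummand (kernel.ι f))).symm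

theorem csRickart_iff_R_csRickart
    {A : Type u} [Category.{v} A] [Abelian A] {B : Type u₂} [Category.{v₂} B] [Abelian B]
    (L : A ⥤ B) (R : B ⥤ A) (adj : L ⊣ R)
    [PreservesFiniteLimits L] [PreservesFiniteColimits L] [R.Full] [R.Faithful]
    (M N : B) :
    CSRickart M N ↔ CSRickart (R.obj M) (R.obj N) :=
  csRickart_iff_R_csRickart_general L R adj M N
end

section
/- Let (L, R) be an adjoint pair of covariant functors between abelian categories with R exact and L fully faithful. For objects M, N of 𝒜, N is dual M-CS-Rickart in 𝒜 if and only if L(N) is dual L(M)-CS-Rickart in ℬ. -/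
open CategoryTheory CategoryTheory.Limits

universe v u v₂ u₂

/-!
Split epimorphisms are preserved by every functor. As `L` is fully faithful its unit is invertible,
so `coker (L f) ≅ L (coker f)` (`L` is a left adjoint) and `R (L (coker f)) ≅ coker f`; hence a
factorization `coker f = t ∘ r` transports along `L`, and one of `coker (L f)` back along `R`, once
both functors preserve superfluous epimorphisms (for `R`, those onto the essential image of `L`).
For `L`: if `h ≫ L t` is epi, applying `R` shows that `R h` is epi, and `R` reflects epimorphisms
into objects where the counit is invertible. For `R`: if `k ≫ R t` is epi, then so is the adjunct
`L k ≫ ε` followed by `t`, and `k = η ≫ R (L k ≫ ε)`.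
-/

section

variable {C : Type u} [Category.{v} C]

lemma SuperfluousEpi.comp_isIso_s14 {P Q S : C} {t : P ⟶ Q} (ht : SuperfluousEpi t) (i : Q ⟶ S)
    [IsIso i] : SuperfluousEpi (t ≫ i) :=
  ⟨epi_comp' ht.1 inferInstance,
    fun _ h _ => ht.2 h (by simpa using epi_comp (h ≫ t ≫ i) (inv i))⟩

def HasSplitSuperfluousFactorization {N Q : C} (π : N ⟶ Q) : Prop :=
  ∃ (P : C) (r : N ⟶ P) (t : P ⟶ Q), IsSplitEpi r ∧ SuperfluousEpi t ∧ r ≫ t = π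

namespace HasSplitSuperfluousFactorization

variable {N N' Q Q' : C} {π : N ⟶ Q}

lemma comp_isIso_s14 (h : HasSplitSuperfluousFactorization π) (i : Q ⟶ Q') [IsIso i] :
    HasSplitSuperfluousFactorization (π ≫ i) := by
  obtain ⟨P, r, t, hr, ht, rfl⟩ := h
  exact ⟨P, r, t ≫ i, hr, ht.comp_isIso_s14 i, (Category.assoc _ _ _).symm⟩

lemma isIso_comp (i : N' ⟶ N) [IsIso i] (h : HasSplitSuperfluousFactorization π) :
    HasSplitSuperfluousFactorization (i ≫ π) := by
  obtain ⟨P, r, t, hr, ht, rfl⟩ := h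
  exact ⟨P, i ≫ r, t, inferInstance, ht, Category.assoc _ _ _⟩

lemma map {D : Type u₂} [Category.{v₂} D] (F : C ⥤ D)
    (hF : ∀ ⦃P : C⦄ (t : P ⟶ Q), SuperfluousEpi t → SuperfluousEpi (F.map t))
    (h : HasSplitSuperfluousFactorization π) : HasSplitSuperfluousFactorization (F.map π) := by
  obtain ⟨P, r, t, hr, ht, rfl⟩ := h
  exact ⟨F.obj P, F.map r, F.map t, inferInstance, hF t ht, (F.map_comp r t).symm⟩

end HasSplitSuperfluousFactorization

lemma dualCSRickart_iff [Abelian C] {M N : C} :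
    DualCSRickart M N ↔ ∀ f : M ⟶ N, HasSplitSuperfluousFactorization (cokernel.π f) := by
  refine forall_congr' fun f => exists₂_congr fun P r => exists_congr fun t => and_congr_left' ?_
  exact ⟨fun ⟨sec, hsec⟩ => .mk' ⟨sec, hsec⟩, fun _ => ⟨section_ r, IsSplitEpi.id r⟩⟩

end

namespace CategoryTheory.Adjunction

variable {A : Type u} [Category.{v} A] {B : Type u₂} [Category.{v₂} B]
  {L : A ⥤ B} {R : B ⥤ A}

lemma epi_of_epi_map_of_isIso_counit (adj : L ⊣ R) {X Y : B} (h : X ⟶ Y)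
    [IsIso (adj.counit.app Y)] [Epi (R.map h)] : Epi h := by
  have := adj.isLeftAdjoint
  have : Epi (adj.counit.app X ≫ h) := by rw [← adj.counit_naturality h]; infer_instance
  exact epi_of_epi (adj.counit.app X) h

lemma superfluousEpi_map_left (adj : L ⊣ R) [L.Full] [L.Faithful] [R.PreservesEpimorphisms]
    {P Q : A} {t : P ⟶ Q} (ht : SuperfluousEpi t) : SuperfluousEpi (L.map t) := by
  have := adj.isLeftAdjoint
  have := ht.1
  refine ⟨inferInstance, fun X h hh => ?_⟩
  have key : (R.map h ≫ inv (adj.unit.app P)) ≫ t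
      = R.map (h ≫ L.map t) ≫ inv (adj.unit.app Q) := by
    have hnat : inv (adj.unit.app P) ≫ t = R.map (L.map t) ≫ inv (adj.unit.app Q) := by
      rw [IsIso.inv_comp_eq]; simp
    rw [Category.assoc, hnat, R.map_comp, Category.assoc]
  have : Epi (R.map h ≫ inv (adj.unit.app P)) := ht.2 _ (by rw [key]; infer_instance)
  have : Epi (R.map h) := by
    simpa using epi_comp (R.map h ≫ inv (adj.unit.app P)) (adj.unit.app P)
  exact adj.epi_of_epi_map_of_isIso_counit h

lemma superfluousEpi_map_right (adj : L ⊣ R) [L.Full] [R.PreservesEpimorphisms]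
    {P Q : B} {t : P ⟶ Q} [IsIso (adj.counit.app Q)] (ht : SuperfluousEpi t) :
    SuperfluousEpi (R.map t) := by
  have := adj.isLeftAdjoint
  have := ht.1
  refine ⟨inferInstance, fun X k _ => ?_⟩
  have key : (adj.homEquiv X P).symm k ≫ t = L.map (k ≫ R.map t) ≫ adj.counit.app Q := by
    simp [homEquiv_counit]
  have : Epi ((adj.homEquiv X P).symm k) := ht.2 _ (by rw [key]; infer_instance)
  rw [← (adj.homEquiv X P).apply_symm_apply k, adj.homEquiv_unit]
  infer_instance

end CategoryTheory.Adjunction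

theorem dualCSRickart_iff_L_dualCSRickart_general
    {A : Type u} [Category.{v} A] [Abelian A] {B : Type u₂} [Category.{v₂} B] [Abelian B]
    (L : A ⥤ B) (R : B ⥤ A) (adj : L ⊣ R)
    [PreservesFiniteColimits R] [L.Full] [L.Faithful]
    (M N : A) :
    DualCSRickart M N ↔ DualCSRickart (L.obj M) (L.obj N) := by
  have := adj.isLeftAdjoint
  rw [dualCSRickart_iff, dualCSRickart_iff]
  constructor
  · intro h g
    obtain ⟨f, rfl⟩ := L.map_surjective g
    have hπ : cokernel.π (L.map f) = L.map (cokernel.π f) ≫ inv (cokernelComparison f L) := by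
      simp [← π_comp_cokernelComparison]
    rw [hπ]
    exact ((h f).map L fun _ _ => adj.superfluousEpi_map_left).comp_isIso_s14 _
  · intro h f
    have : IsIso (adj.counit.app (cokernel (L.map f))) :=
      adj.isIso_counit_app_of_iso (asIso (cokernelComparison f L))
    have hπ : cokernel.π f = (adj.unit.app N ≫ R.map (cokernel.π (L.map f))) ≫
        R.map (cokernelComparison f L) ≫ inv (adj.unit.app (cokernel f)) := by
      simp [← R.map_comp_assoc, π_comp_cokernelComparison]
    rw [hπ]
    exact (((h (L.map f)).map R fun _ _ => adj.superfluousEpi_map_right).isIso_comp _).comp_isIso_s14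
      _

theorem dualCSRickart_iff_L_dualCSRickart
    {A : Type u} [Category.{v} A] [Abelian A] {B : Type u₂} [Category.{v₂} B] [Abelian B]
    (L : A ⥤ B) (R : B ⥤ A) (adj : L ⊣ R)
    [PreservesFiniteLimits R] [PreservesFiniteColimits R] [L.Full] [L.Faithful]
    (M N : A) :
    DualCSRickart M N ↔ DualCSRickart (L.obj M) (L.obj N) :=
  dualCSRickart_iff_L_dualCSRickart_general L R adj M N
end

section
/- Let (𝒜, ℬ, 𝒞) be a recollement of abelian categories with functors i : 𝒜 → ℬ, q, p : ℬ → 𝒜, e : ℬ → 𝒞, l, r : 𝒞 → ℬ. For objects M, N of 𝒞, N is M-CS-Rickart in 𝒞 if and only if r(N) is r(M)-CS-Rickart in ℬ. -/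
/-!
Since `r` is a fully faithful right adjoint, it preserves kernels and every morphism
`r M ⟶ r N` is `r f`; so it suffices that a monomorphism `ι` in `𝒞` factors as an essential
monomorphism followed by a split monomorphism iff `r ι` does. Split monomorphisms are preserved
by every functor. `r` preserves essential monomorphisms because `e` is left exact: if `r m ≫ h`
is mono then so is `e h`, hence `e` kills `ker h`, which therefore maps to zero in `r Y`.
Conversely `e` carries a factorisation of `r ι` to one of `e (r ι) ≅ ι`; essentiality survives
since the unit of `e ⊣ r` is invertible on the image of `r`.
-/

open CategoryTheory CategoryTheory.Limits

universe v u v₂ u₂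

section

variable {C : Type u} [Category.{v} C]

lemma EssentialMono.iso_comp_s17 {X Y Z : C} (φ : X ⟶ Y) [IsIso φ] {m : Y ⟶ Z}
    (hm : EssentialMono m) : EssentialMono (φ ≫ m) := by
  have := hm.1
  refine ⟨mono_comp _ _, fun P h hφmh => hm.2 h ?_⟩
  rwa [Category.assoc, mono_comp_iff_of_isIso] at hφmh

/-- The subobject `ι` is essential in a direct summand of `M`. -/
def IsEssentialInSummand {K M : C} (ι : K ⟶ M) : Prop :=
  ∃ (L : C) (m : K ⟶ L) (s : L ⟶ M), EssentialMono m ∧ IsSplitMono s ∧ m ≫ s = ι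

lemma IsEssentialInSummand.iso_comp_s17 {K K' M : C} {ι : K ⟶ M} (h : IsEssentialInSummand ι)
    (φ : K' ⟶ K) [IsIso φ] : IsEssentialInSummand (φ ≫ ι) := by
  obtain ⟨L, m, s, hm, hs, rfl⟩ := h
  exact ⟨L, φ ≫ m, s, hm.iso_comp_s17 φ, hs, Category.assoc _ _ _⟩

lemma IsEssentialInSummand.comp_iso {K M M' : C} {ι : K ⟶ M} (h : IsEssentialInSummand ι)
    (ψ : M ⟶ M') [IsIso ψ] : IsEssentialInSummand (ι ≫ ψ) := by
  obtain ⟨L, m, s, hm, hs, rfl⟩ := h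
  exact ⟨L, m, s ≫ ψ, hm, inferInstance, (Category.assoc _ _ _).symm⟩

lemma isEssentialInSummand_iso_comp_iff {K K' M : C} (ι : K ⟶ M) (φ : K' ⟶ K) [IsIso φ] :
    IsEssentialInSummand (φ ≫ ι) ↔ IsEssentialInSummand ι :=
  ⟨fun h => by simpa using h.iso_comp_s17 (inv φ), fun h => h.iso_comp_s17 φ⟩

lemma IsEssentialInSummand.map {D : Type u₂} [Category.{v₂} D] (F : C ⥤ D) {K M : C}
    {ι : K ⟶ M} (h : IsEssentialInSummand ι)
    (hF : ∀ ⦃L : C⦄ (m : K ⟶ L), EssentialMono m → EssentialMono (F.map m)) :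
    IsEssentialInSummand (F.map ι) := by
  obtain ⟨L, m, s, hm, hs, rfl⟩ := h
  exact ⟨F.obj L, F.map m, F.map s, hF m hm, inferInstance, (F.map_comp _ _).symm⟩

lemma csRickart_iff_forall_isEssentialInSummand [Abelian C] (M N : C) :
    CSRickart M N ↔ ∀ f : M ⟶ N, IsEssentialInSummand (kernel.ι f) := by
  refine forall_congr' fun f => exists_congr fun L => exists_congr fun m =>
    exists_congr fun s => and_congr_right fun _ => and_congr_left fun _ => ?_
  exact ⟨fun ⟨retr, h⟩ => .mk' ⟨retr, h⟩, fun _ => ⟨retraction s, IsSplitMono.id s⟩⟩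

end

namespace CategoryTheory.Adjunction

variable {B : Type u} [Category.{v} B] {C : Type u₂} [Category.{v₂} C]
  {e : B ⥤ C} {r : C ⥤ B}

lemma eq_zero_of_isZero_obj [HasZeroMorphisms B] (adj : e ⊣ r)
    {Z : B} {Y : C} (hZ : IsZero (e.obj Z)) (g : Z ⟶ r.obj Y) : g = 0 :=
  (adj.homEquiv Z Y).symm.injective (hZ.eq_of_src _ _)

lemma essentialMono_map_leftAdjoint_of_mono_unit [r.Full] [e.PreservesMonomorphisms]
    (adj : e ⊣ r) {X Y : B} {m : X ⟶ Y} [Mono (adj.unit.app X)] (hm : EssentialMono m) :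
    EssentialMono (e.map m) := by
  have := hm.1
  have := adj.isRightAdjoint
  refine ⟨inferInstance, fun P h _ => ?_⟩
  have hmηh : Mono (m ≫ adj.unit.app Y ≫ r.map h) := by
    rw [← adj.unit_naturality_assoc, ← r.map_comp]
    infer_instance
  have := hm.2 _ hmηh
  -- the counit is mono because `r` is full
  have hh : e.map (adj.unit.app Y ≫ r.map h) ≫ adj.counit.app P = h := by simp
  rw [← hh]
  infer_instance

variable [Abelian B] [Abelian C]

lemma essentialMono_map_rightAdjoint [r.Full] [r.Faithful] [PreservesFiniteLimits e]
    (adj : e ⊣ r) {X Y : C} {m : X ⟶ Y} (hm : EssentialMono m) : EssentialMono (r.map m) := by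
  have := hm.1
  have := adj.isRightAdjoint
  refine ⟨inferInstance, fun P h _ => ?_⟩
  have he : Mono (e.map h) := by
    have hmεh : Mono (m ≫ inv (adj.counit.app Y) ≫ e.map h) := by
      rw [← mono_comp_iff_of_isIso (adj.counit.app X), ← adj.counit_naturality_assoc m, IsIso.hom_inv_id_assoc, ← e.map_comp]
      infer_instance
    exact (mono_comp_iff_of_isIso _ _).1 (hm.2 _ hmεh)
  have hker : IsZero (e.obj (kernel h)) :=
    (isZero_kernel_of_mono (e.map h)).of_iso (PreservesKernel.iso e h)
  exact Abelian.mono_of_kernel_ι_eq_zero h (adj.eq_zero_of_isZero_obj hker _)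

lemma isEssentialInSummand_map_iff [r.Full] [r.Faithful] [PreservesFiniteLimits e]
    (adj : e ⊣ r) {K M : C} (ι : K ⟶ M) :
    IsEssentialInSummand (r.map ι) ↔ IsEssentialInSummand ι := by
  refine ⟨fun h => ?_, fun h => h.map r fun _ _ => adj.essentialMono_map_rightAdjoint⟩
  have hει := (h.map e fun _ _ => adj.essentialMono_map_leftAdjoint_of_mono_unit).iso_comp_s17
    (inv (adj.counit.app K)) |>.comp_iso (adj.counit.app M)
  simpa using hει

lemma isEssentialInSummand_kernel_ι_map_iff [r.Full] [r.Faithful] [PreservesFiniteLimits e]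
    (adj : e ⊣ r) {M N : C} (f : M ⟶ N) :
    IsEssentialInSummand (kernel.ι (r.map f)) ↔ IsEssentialInSummand (kernel.ι f) := by
  have := adj.isRightAdjoint
  rw [← PreservesKernel.iso_inv_ι, isEssentialInSummand_iso_comp_iff,
    adj.isEssentialInSummand_map_iff]

end CategoryTheory.Adjunction

theorem csRickart_iff_r_csRickart_of_recollement_general
    {B : Type u} [Category.{v} B] [Abelian B]
    {Cc : Type u} [Category.{v} Cc] [Abelian Cc]
    (e : B ⥤ Cc) (l r : Cc ⥤ B)
    (adj_le : l ⊣ e) (adj_er : e ⊣ r)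
    [r.Full] [r.Faithful]
    (M N : Cc) :
    CSRickart M N ↔ CSRickart (r.obj M) (r.obj N) := by
  have := adj_le.isRightAdjoint
  simp only [csRickart_iff_forall_isEssentialInSummand, r.map_surjective.forall,
    adj_er.isEssentialInSummand_kernel_ι_map_iff]

theorem csRickart_iff_r_csRickart_of_recollement
    {A : Type u} [Category.{v} A] [Abelian A]
    {B : Type u} [Category.{v} B] [Abelian B]
    {Cc : Type u} [Category.{v} Cc] [Abelian Cc]
    (i : A ⥤ B) (q p : B ⥤ A) (e : B ⥤ Cc) (l r : Cc ⥤ B)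
    (adj_le : l ⊣ e) (adj_er : e ⊣ r) (adj_qi : q ⊣ i) (adj_ip : i ⊣ p)
    [i.Full] [i.Faithful] [l.Full] [l.Faithful] [r.Full] [r.Faithful]
    (him : ∀ X : B, i.essImage X ↔ IsZero (e.obj X))
    (M N : Cc) :
    CSRickart M N ↔ CSRickart (r.obj M) (r.obj N) :=
  csRickart_iff_r_csRickart_of_recollement_general e l r adj_le adj_er M N
end

section
/- The class of im-local-retractable right R-modules is closed under direct summands: if M is im-local-retractable and N is a direct summand of M, then N is im-local-retractable. -/
universe u

/-- A module `M` is im-local-retractable if for every injective `R`-linear map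
`k : K → M` and every `x ∈ K`, there is `h : M → K` with `x ∈ Im(h ∘ k)`. -/
def ImLocalRetractable (R : Type u) (M : Type u) [Ring R] [AddCommGroup M]
    [Module R M] : Prop :=
  ∀ ⦃K : Type u⦄ [AddCommGroup K] [Module R K] (k : K →ₗ[R] M),
    Function.Injective k → ∀ x : K, ∃ h : M →ₗ[R] K, x ∈ LinearMap.range (h.comp k)

theorem ImLocalRetractable.of_injective {R : Type u} [Ring R] {M N : Type u}
    [AddCommGroup M] [Module R M] [AddCommGroup N] [Module R N]
    (hM : ImLocalRetractable R M) (i : N →ₗ[R] M) (hi : Function.Injective i) :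
    ImLocalRetractable R N := by
  intro K _ _ k hk x
  obtain ⟨h, y, hy⟩ := hM (i.comp k) (hi.comp hk) x
  exact ⟨h.comp i, y, hy⟩

theorem imLocalRetractable_of_directSummand (R : Type u) [Ring R]
    (M N : Type u) [AddCommGroup M] [Module R M] [AddCommGroup N] [Module R N]
    (hM : ImLocalRetractable R M)
    (i : N →ₗ[R] M) (π : M →ₗ[R] N) (hπi : π.comp i = LinearMap.id) :
    ImLocalRetractable R N :=
  hM.of_injective i (LinearMap.injective_of_comp_eq_id i π hπi)
end
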